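/- arXiv:1809.01222 — 7 statements merged into one kernel-verified Lean document; each statement's English description precedes it below -/
import Mathlib

section
/- For every t > 0, z₀ ∈ ℝ, and g ∈ L²(ℝ), the double integral ∬_{Ω₊} |g(u)| e^{8t(u−z₀)v} dA(u,v), where Ω₊ = {u + iv : u < z₀, 0 < v < z₀ − u}, is at most K ‖g‖_{L²(ℝ)} t^{−3/4}, with K = (∫_{−∞}^0 [(1 − e^{−8w²})/(8w)]² dw)^{1/2}. -/
/-!
After integrating in `v`, the fibre integral over `(0, z₀ - u)` equals `|φ(w)| / √t`, where
`w = √t (u - z₀)` and `φ(w) = (1 - e^{-8w²}) / (8w)` is `sectorProfile`. Cauchy–Schwarz in `u`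
over `(-∞, z₀)` bounds the double integral by `‖g‖₂` times the `L²` norm of this function, and
the substitution `w = √t (u - z₀)` turns that norm into `t^{-3/4} ‖φ‖_{L²(-∞, 0)} = t^{-3/4} K`.
-/

open MeasureTheory Set
open scoped ENNReal

lemma setLIntegral_prod_fiberwise {α β : Type*} [MeasurableSpace α] [MeasurableSpace β]
    {μ : Measure α} {ν : Measure β} [SFinite ν] {s : Set α} {B : α → Set β}
    (hs : MeasurableSet s) (hsB : MeasurableSet {p : α × β | p.1 ∈ s ∧ p.2 ∈ B p.1})
    {f : α × β → ℝ≥0∞} (hf : AEMeasurable f (μ.prod ν)) :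
    ∫⁻ p in {p : α × β | p.1 ∈ s ∧ p.2 ∈ B p.1}, f p ∂μ.prod ν =
      ∫⁻ x in s, ∫⁻ y in B x, f (x, y) ∂ν ∂μ := by
  rw [← lintegral_indicator hsB, lintegral_prod _ (hf.indicator hsB),
    ← lintegral_indicator hs]
  congr 1 with x
  by_cases hx : x ∈ s
  · have hB : MeasurableSet (B x) := by simpa [hx] using measurable_prodMk_left (x := x) hsB
    rw [indicator_of_mem hx, ← lintegral_indicator hB]
    congr 1 with y
    by_cases hy : y ∈ B x <;> simp [indicator, hx, hy]
  · simp [indicator, hx]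

lemma lintegral_exp_mul_Ioo {a b : ℝ} (ha : a ≠ 0) (hb : 0 ≤ b) :
    ∫⁻ v in Ioo 0 b, ENNReal.ofReal (Real.exp (a * v)) =
      ENNReal.ofReal ((Real.exp (a * b) - 1) / a) := by
  have hint : IntegrableOn (fun v => Real.exp (a * v)) (Ioo 0 b) :=
    (by fun_prop : Continuous fun v => Real.exp (a * v)).integrableOn_Icc.mono_set
      Ioo_subset_Icc_self
  rw [← ofReal_integral_eq_lintegral_ofReal hint (ae_of_all _ fun v => (Real.exp_pos _).le),
    ← integral_Ioc_eq_integral_Ioo, ← intervalIntegral.integral_of_le hb,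
    intervalIntegral.integral_comp_mul_left (fun x => Real.exp x) ha, integral_exp, mul_zero,
    Real.exp_zero, smul_eq_mul, inv_mul_eq_div]

lemma lintegral_comp_mul_sub_Iio {s : ℝ} (hs : 0 < s) (c : ℝ) (F : ℝ → ℝ≥0∞) :
    ∫⁻ u in Iio c, F (s * (u - c)) = ENNReal.ofReal s⁻¹ * ∫⁻ w in Iio 0, F w := by
  have himage : (fun u => s * (u - c)) '' Iio c = Iio 0 := by
    ext w
    simp only [mem_image, mem_Iio]
    constructor
    · rintro ⟨u, hu, rfl⟩
      exact mul_neg_of_pos_of_neg hs (by linarith)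
    · intro hw
      refine ⟨w / s + c, ?_, ?_⟩
      · linarith [div_neg_of_neg_of_pos hw hs]
      · rw [add_sub_cancel_right, mul_div_cancel₀ _ hs.ne']
  have hderiv : ∀ u ∈ Iio c, HasDerivWithinAt (fun u => s * (u - c)) s (Iio c) u := fun u _ =>
    (((hasDerivAt_id u).sub_const c).const_mul s).hasDerivWithinAt.congr_deriv (mul_one s)
  rw [← himage, lintegral_image_eq_lintegral_abs_deriv_mul measurableSet_Iio hderiv
    (fun u _ v _ h => by simpa [hs.ne'] using h), lintegral_const_mul' _ _ ENNReal.ofReal_ne_top,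
    ← mul_assoc, ← ENNReal.ofReal_mul (inv_nonneg.2 hs.le), abs_of_pos hs, inv_mul_cancel₀ hs.ne',
    ENNReal.ofReal_one, one_mul]

lemma eLpNorm_comp_mul_sub_Iio {E : Type*} [NormedAddCommGroup E] {p : ℝ≥0∞} (hp₀ : p ≠ 0)
    (hp : p ≠ ∞) {s : ℝ} (hs : 0 < s) (c : ℝ) (f : ℝ → E) :
    eLpNorm (fun u => f (s * (u - c))) p (volume.restrict (Iio c)) =
      ENNReal.ofReal (s ^ (-p.toReal⁻¹)) * eLpNorm f p (volume.restrict (Iio 0)) := by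
  rw [eLpNorm_eq_lintegral_rpow_enorm_toReal hp₀ hp,
    eLpNorm_eq_lintegral_rpow_enorm_toReal hp₀ hp,
    lintegral_comp_mul_sub_Iio hs c (fun w => ‖f w‖ₑ ^ p.toReal),
    ENNReal.mul_rpow_of_nonneg _ _ (by positivity), ENNReal.ofReal_rpow_of_pos (inv_pos.2 hs),
    Real.inv_rpow hs.le, ← Real.rpow_neg hs.le, one_div]

lemma lintegral_enorm_mul_le_eLpNorm_two {α E F : Type*} [MeasurableSpace α] {μ : Measure α}
    [NormedAddCommGroup E] [NormedAddCommGroup F] {f : α → E} {g : α → F}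
    (hf : AEStronglyMeasurable f μ) (hg : AEStronglyMeasurable g μ) :
    ∫⁻ x, ‖f x‖ₑ * ‖g x‖ₑ ∂μ ≤ eLpNorm f 2 μ * eLpNorm g 2 μ := by
  have := eLpNorm_le_eLpNorm_mul_eLpNorm'_of_norm (p := 2) (q := 2) (r := 1) hf hg
    (fun x y => ‖x‖ * ‖y‖) 1 (ae_of_all _ fun x => by simp)
  simpa [eLpNorm_one_eq_lintegral_enorm, enorm_mul] using this

noncomputable def sectorProfile (w : ℝ) : ℝ := (1 - Real.exp (-8 * w ^ 2)) / (8 * w)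

lemma measurable_sectorProfile : Measurable sectorProfile := by
  unfold sectorProfile; fun_prop

lemma sectorProfile_nonpos {w : ℝ} (hw : w < 0) : sectorProfile w ≤ 0 :=
  div_nonpos_of_nonneg_of_nonpos
    (sub_nonneg.2 (Real.exp_le_one_iff.2 (by nlinarith [sq_nonneg w]))) (by linarith)

/-- From `1 - e^{-x} ≤ min x 1`. It makes `K` the integral of an integrable function rather than
a junk value. -/
lemma sectorProfile_sq_le (w : ℝ) : sectorProfile w ^ 2 ≤ (1 + w ^ 2)⁻¹ := by
  rcases eq_or_ne w 0 with rfl | hw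
  · simp [sectorProfile]
  set a := 1 - Real.exp (-8 * w ^ 2)
  have ha₀ : 0 ≤ a := by
    have : Real.exp (-8 * w ^ 2) ≤ 1 := Real.exp_le_one_iff.2 (by nlinarith [sq_nonneg w])
    linarith
  have ha₁ : a ≤ 1 := by have := Real.exp_pos (-8 * w ^ 2); linarith
  have ha₂ : a ≤ 8 * w ^ 2 := by have := Real.add_one_le_exp (-8 * w ^ 2); linarith
  have hw2 : 0 < w ^ 2 := by positivity
  rw [sectorProfile, div_pow, div_le_iff₀ (by positivity), inv_mul_eq_div,
    le_div_iff₀ (by positivity)]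
  nlinarith [mul_le_mul ha₂ ha₁ ha₀ (by positivity), mul_le_mul_of_nonneg_right
    (mul_le_mul ha₁ ha₁ ha₀ zero_le_one) hw2.le]

lemma integrable_sectorProfile_sq : Integrable (fun w => sectorProfile w ^ 2) :=
  integrable_inv_one_add_sq.mono' (measurable_sectorProfile.pow_const 2).aestronglyMeasurable
    (ae_of_all _ fun w => by
      rw [Real.norm_of_nonneg (sq_nonneg _)]; exact sectorProfile_sq_le w)

lemma eLpNorm_sectorProfile_Iio :
    eLpNorm sectorProfile 2 (volume.restrict (Iio 0)) =
      ENNReal.ofReal √(∫ w in Iio 0, sectorProfile w ^ 2) := by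
  have hmem : MemLp sectorProfile 2 (volume.restrict (Iio 0)) :=
    (memLp_two_iff_integrable_sq measurable_sectorProfile.aestronglyMeasurable).2
      integrable_sectorProfile_sq.integrableOn
  rw [hmem.eLpNorm_eq_integral_rpow_norm two_ne_zero ENNReal.ofNat_ne_top, Real.sqrt_eq_rpow]
  simp [one_div]

lemma lintegral_exp_Ioo_eq_enorm_sectorProfile {t z₀ u : ℝ} (ht : 0 < t) (hu : u < z₀) :
    ∫⁻ v in Ioo 0 (z₀ - u), ENNReal.ofReal (Real.exp (8 * t * (u - z₀) * v)) =
      ‖(√t)⁻¹ * sectorProfile (√t * (u - z₀))‖ₑ := by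
  have hs : 0 < √t := Real.sqrt_pos.2 ht
  have hw : √t * (u - z₀) < 0 := mul_neg_of_pos_of_neg hs (by linarith)
  rw [lintegral_exp_mul_Ioo (by nlinarith) (by linarith), Real.enorm_eq_ofReal_abs,
    abs_of_nonpos (mul_nonpos_of_nonneg_of_nonpos (inv_nonneg.2 hs.le) (sectorProfile_nonpos hw))]
  congr 1
  have hst : √t ^ 2 = t := Real.sq_sqrt ht.le
  have hexp : 8 * t * (u - z₀) * (z₀ - u) = -8 * (√t * (u - z₀)) ^ 2 := by
    rw [mul_pow, hst]; ring
  have hden : 8 * t * (u - z₀) = √t * (8 * (√t * (u - z₀))) := by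
    linear_combination (-8 * (u - z₀)) * hst
  rw [hexp, hden, sectorProfile]
  field_simp [hw.ne]
  ring

lemma lintegral_sector_le_eLpNorm_mul {E : Type*} [NormedAddCommGroup E] {t : ℝ} (ht : 0 < t)
    (z₀ : ℝ) {g : ℝ → E} (hg : AEStronglyMeasurable g) :
    ∫⁻ p in {p : ℝ × ℝ | p.1 < z₀ ∧ 0 < p.2 ∧ p.2 < z₀ - p.1},
        ‖g p.1‖ₑ * ENNReal.ofReal (Real.exp (8 * t * (p.1 - z₀) * p.2)) ≤
      eLpNorm g 2 volume *
        ENNReal.ofReal (t ^ (-(3 : ℝ) / 4) * √(∫ w in Iio 0, sectorProfile w ^ 2)) := by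
  set H : ℝ → ℝ := fun u => (√t)⁻¹ * sectorProfile (√t * (u - z₀))
  have hH : eLpNorm H 2 (volume.restrict (Iio z₀)) =
      ENNReal.ofReal (t ^ (-(3 : ℝ) / 4) * √(∫ w in Iio 0, sectorProfile w ^ 2)) := by
    have hs : 0 < √t := Real.sqrt_pos.2 ht
    have hexp : (√t)⁻¹ * √t ^ (-(2 : ℝ≥0∞).toReal⁻¹) = t ^ (-(3 : ℝ) / 4) := by
      rw [Real.sqrt_eq_rpow, ← Real.rpow_neg ht.le, ← Real.rpow_mul ht.le, ← Real.rpow_add ht]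
      norm_num
    rw [show H = (√t)⁻¹ • fun u => sectorProfile (√t * (u - z₀)) from rfl, eLpNorm_const_smul,
      eLpNorm_comp_mul_sub_Iio two_ne_zero ENNReal.ofNat_ne_top hs, eLpNorm_sectorProfile_Iio,
      Real.enorm_eq_ofReal (inv_nonneg.2 hs.le), ← mul_assoc, ← ENNReal.ofReal_mul (by positivity),
      ← ENNReal.ofReal_mul (by positivity), hexp]
  have hsector : MeasurableSet {p : ℝ × ℝ | p.1 ∈ Iio z₀ ∧ p.2 ∈ Ioo 0 (z₀ - p.1)} := by
    refine (measurableSet_lt measurable_fst measurable_const).inter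
      ((measurableSet_lt measurable_const measurable_snd).inter ?_)
    exact measurableSet_lt measurable_snd (measurable_const.sub measurable_fst)
  calc ∫⁻ p in {p : ℝ × ℝ | p.1 ∈ Iio z₀ ∧ p.2 ∈ Ioo 0 (z₀ - p.1)},
        ‖g p.1‖ₑ * ENNReal.ofReal (Real.exp (8 * t * (p.1 - z₀) * p.2)) ∂volume.prod volume
      = ∫⁻ u in Iio z₀, ‖g u‖ₑ *
          ∫⁻ v in Ioo 0 (z₀ - u), ENNReal.ofReal (Real.exp (8 * t * (u - z₀) * v)) := by
        rw [setLIntegral_prod_fiberwise (B := fun u => Ioo 0 (z₀ - u))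
          (f := fun p => ‖g p.1‖ₑ * ENNReal.ofReal (Real.exp (8 * t * (p.1 - z₀) * p.2)))
          measurableSet_Iio hsector (hg.enorm.comp_fst.mul (by fun_prop))]
        simp_rw [lintegral_const_mul' _ _ enorm_ne_top]
    _ = ∫⁻ u in Iio z₀, ‖g u‖ₑ * ‖H u‖ₑ :=
        setLIntegral_congr_fun measurableSet_Iio fun u hu => by
          rw [lintegral_exp_Ioo_eq_enorm_sectorProfile ht hu]
    _ ≤ eLpNorm g 2 (volume.restrict (Iio z₀)) * eLpNorm H 2 (volume.restrict (Iio z₀)) :=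
        lintegral_enorm_mul_le_eLpNorm_two hg.restrict
          ((measurable_sectorProfile.comp (by fun_prop)).const_mul _).aestronglyMeasurable
    _ ≤ _ := by
        rw [hH]
        gcongr
        exact Measure.restrict_le_self

/-- For `t > 0`, `z₀ ∈ ℝ`, `g ∈ L²(ℝ)`, the double integral of `|g(u)| e^{8t(u−z₀)v}` over
the sector `Ω₊ = {(u,v) : u < z₀, 0 < v < z₀ − u}` is at most `K ‖g‖_{L²} t^{−3/4}`,
where `K = (∫_{−∞}^0 [(1 − e^{−8w²})/(8w)]² dw)^{1/2}`. -/
theorem I_plus_estimate (t z₀ : ℝ) (ht : 0 < t) (g : ℝ → ℂ)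
    (hg : MemLp g 2 (volume : Measure ℝ)) :
    (∫ p in {p : ℝ × ℝ | p.1 < z₀ ∧ 0 < p.2 ∧ p.2 < z₀ - p.1},
        ‖g p.1‖ * Real.exp (8 * t * (p.1 - z₀) * p.2) ∂(volume : Measure (ℝ × ℝ))) ≤
      Real.sqrt (∫ w in Set.Iio (0 : ℝ), ((1 - Real.exp (-8 * w ^ 2)) / (8 * w)) ^ 2) *
        (eLpNorm g 2 (volume : Measure ℝ)).toReal * t ^ (-(3 : ℝ) / 4) := by
  have hbound := lintegral_sector_le_eLpNorm_mul ht z₀ hg.1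
  rw [← ENNReal.ofReal_toReal hg.eLpNorm_ne_top, ← ENNReal.ofReal_mul ENNReal.toReal_nonneg]
    at hbound
  refine (Real.le_norm_self _).trans ?_
  rw [← toReal_enorm]
  refine (ENNReal.toReal_le_of_le_ofReal (by positivity)
    ((enorm_integral_le_lintegral_enorm _).trans (le_of_eq_of_le ?_ hbound))).trans_eq ?_
  · refine lintegral_congr fun p => ?_
    rw [enorm_mul, enorm_norm, Real.enorm_eq_ofReal (Real.exp_pos _).le]
  · unfold sectorProfile
    ring
end

section
/- Let q̂₀ ∈ H¹(ℝ) and t > 0, z₀ ∈ ℝ. Define E(u,v) := cos(2 arg(u+iv−z₀)) q̂₀(u) + (1 − cos(2 arg(u+iv−z₀))) q̂₀(z₀) on the sectors Ω₊ ∪ Ω₋ where 3π/4 < arg(z−z₀) < π or −π/4 < arg(z−z₀) < 0. Then for all u+iv in these sectors, |∂̄E(u,v)| ≤ (1/2)|q̂₀'(u)| + ‖q̂₀'‖_{L²(ℝ)} ((u−z₀)² + v²)^{−1/4}, where ∂̄ = (1/2)(∂_u + i∂_v). -/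
open MeasureTheory Real Complex

/-!
Away from `z₀`, `cos (2 arg (z - z₀))` is the rational function `(x² - y²) / (x² + y²)` of
`x + iy = z - z₀`, whose `∂̄`-derivative `2xy (y - ix) / (x² + y²)²` has modulus at most
`(x² + y²)^(-1/2)`. Since `E = cos (2 arg (z - z₀)) (q̂₀(u) - q̂₀(z₀)) + q̂₀(z₀)` and `q̂₀(u)` depends
on `u` only, the product rule gives
`∂̄E = ∂̄ cos (2 arg (z - z₀)) · (q̂₀(u) - q̂₀(z₀)) + cos (2 arg (z - z₀)) q̂₀'(u) / 2`.
The fundamental theorem of calculus and Cauchy–Schwarz give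
`|q̂₀(u) - q̂₀(z₀)| ≤ ‖q̂₀'‖₂ |u - z₀|^(1/2) ≤ ‖q̂₀'‖₂ (x² + y²)^(1/4)`.
-/

theorem setIntegral_norm_uIoc_le_eLpNorm_mul_rpow {F : Type*} [NormedAddCommGroup F] {g : ℝ → F}
    (hg : MemLp g 2) (a b : ℝ) :
    ∫ x in Set.uIoc a b, ‖g x‖ ≤ (eLpNorm g 2).toReal * |b - a| ^ (1 / 2 : ℝ) := by
  set μ := volume.restrict (Set.uIoc a b)
  have hμ : μ Set.univ = ENNReal.ofReal |b - a| := by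
    rw [Measure.restrict_apply_univ, Real.volume_uIoc]
  have : IsFiniteMeasure μ := ⟨by rw [hμ]; exact ENNReal.ofReal_lt_top⟩
  have hL1 : ∫ x, ‖g x‖ ∂μ = (eLpNorm g 1 μ).toReal := by
    rw [eLpNorm_one_eq_lintegral_enorm, integral_norm_eq_lintegral_enorm hg.1.restrict]
  have hHolder : eLpNorm g 1 μ ≤ eLpNorm g 2 * ENNReal.ofReal (|b - a| ^ (1 / 2 : ℝ)) :=
    calc eLpNorm g 1 μ ≤ eLpNorm g 2 μ * μ Set.univ ^ (1 / 2 : ℝ) := by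
          convert eLpNorm_le_eLpNorm_mul_rpow_measure_univ (p := 1) (q := 2) (by norm_num)
            hg.1.restrict using 2
          norm_num [hμ]
      _ ≤ _ := by
          rw [hμ, ENNReal.ofReal_rpow_of_nonneg (abs_nonneg _) (by norm_num)]
          exact mul_le_mul_left (eLpNorm_mono_measure _ Measure.restrict_le_self) _
  rw [hL1, ← ENNReal.toReal_ofReal (by positivity : 0 ≤ |b - a| ^ (1 / 2 : ℝ)),
    ← ENNReal.toReal_mul]
  exact ENNReal.toReal_mono (ENNReal.mul_ne_top hg.2.ne ENNReal.ofReal_ne_top) hHolder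

theorem norm_sub_le_eLpNorm_deriv_mul_rpow {F : Type*} [NormedAddCommGroup F] [NormedSpace ℝ F]
    [CompleteSpace F] {f f' : ℝ → F} (hf : ∀ x, HasDerivAt f (f' x) x) (hf' : MemLp f' 2)
    (a b : ℝ) :
    ‖f b - f a‖ ≤ (eLpNorm f' 2).toReal * |b - a| ^ (1 / 2 : ℝ) := by
  have hint : IntervalIntegrable f' volume a b :=
    ((hf'.locallyIntegrable one_le_two).integrableOn_isCompact isCompact_uIcc).intervalIntegrable
  rw [← intervalIntegral.integral_eq_sub_of_hasDerivAt (fun x _ => hf x) hint]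
  exact intervalIntegral.norm_integral_le_integral_norm_uIoc.trans
    (setIntegral_norm_uIoc_le_eLpNorm_mul_rpow hf' a b)

theorem abs_rpow_half_le (x y : ℝ) : |x| ^ (1 / 2 : ℝ) ≤ (x ^ 2 + y ^ 2) ^ (1 / 4 : ℝ) := by
  have : |x| ^ (1 / 2 : ℝ) = (x ^ 2) ^ (1 / 4 : ℝ) := by
    rw [← sq_abs, ← rpow_natCast, ← rpow_mul (abs_nonneg x)]; norm_num
  rw [this]
  exact rpow_le_rpow (sq_nonneg x) (by nlinarith [sq_nonneg y]) (by norm_num)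

/-- `∂̄ = (∂ₓ + i ∂_y) / 2`, with `p = (x, y)` standing for `x + iy`. -/
noncomputable def dbar (f : ℝ × ℝ → ℂ) (p : ℝ × ℝ) : ℂ :=
  (1 / 2 : ℂ) * (fderiv ℝ f p (1, 0) + I * fderiv ℝ f p (0, 1))

theorem dbar_eq_of_hasDerivAt {f : ℝ × ℝ → ℂ} {p : ℝ × ℝ} {a b : ℂ}
    (hf : DifferentiableAt ℝ f p) (ha : HasDerivAt (fun x => f (x, p.2)) a p.1)
    (hb : HasDerivAt (fun y => f (p.1, y)) b p.2) :
    dbar f p = (a + I * b) / 2 := by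
  have ha' : HasDerivAt (fun x => f (x, p.2)) (fderiv ℝ f p (1, 0)) p.1 :=
    hf.hasFDerivAt.comp_hasDerivAt (x := p.1) ((hasDerivAt_id _).prodMk (hasDerivAt_const _ _))
  have hb' : HasDerivAt (fun y => f (p.1, y)) (fderiv ℝ f p (0, 1)) p.2 :=
    hf.hasFDerivAt.comp_hasDerivAt (x := p.2) ((hasDerivAt_const _ _).prodMk (hasDerivAt_id _))
  rw [dbar, ha'.unique ha, hb'.unique hb]
  ring

theorem dbar_add_const (f : ℝ × ℝ → ℂ) (c : ℂ) (p : ℝ × ℝ) :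
    dbar (fun q => f q + c) p = dbar f p := by
  simp only [dbar, fderiv_add_const]

theorem dbar_comp_sub (f : ℝ × ℝ → ℂ) (a p : ℝ × ℝ) :
    dbar (fun q => f (q - a)) p = dbar f (p - a) := by
  simp only [dbar, fderiv_comp_sub]

theorem Filter.EventuallyEq.dbar_eq {f g : ℝ × ℝ → ℂ} {p : ℝ × ℝ} (h : f =ᶠ[nhds p] g) :
    dbar f p = dbar g p := by
  simp only [dbar, h.fderiv_eq]

theorem dbar_mul_comp_fst {g : ℝ × ℝ → ℂ} {h : ℝ → ℂ} {h' : ℂ} {p : ℝ × ℝ}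
    (hg : DifferentiableAt ℝ g p) (hh : HasDerivAt h h' p.1) :
    dbar (fun q => g q * h q.1) p = dbar g p * h p.1 + g p * h' / 2 := by
  have hh' : HasFDerivAt (fun q : ℝ × ℝ => h q.1) _ p := hh.hasFDerivAt.comp p hasFDerivAt_fst
  rw [dbar, (hg.hasFDerivAt.fun_mul hh').fderiv, dbar]
  simp only [one_div, add_apply, smul_apply, ContinuousLinearMap.comp_apply,
    ContinuousLinearMap.coe_fst', ContinuousLinearMap.toSpanSingleton_apply, one_smul, smul_eq_mul,
    zero_smul, mul_zero, zero_add]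
  ring

/-- `cos (2 arg (x + iy))` as a rational function of `p = (x, y)`; its junk value at `0` is `0`. -/
noncomputable def cosTwoArg (p : ℝ × ℝ) : ℝ := (p.1 ^ 2 - p.2 ^ 2) / (p.1 ^ 2 + p.2 ^ 2)

theorem Complex.cos_two_mul_arg {z : ℂ} (hz : z ≠ 0) :
    Real.cos (2 * arg z) = cosTwoArg (z.re, z.im) := by
  have hr : z.re ^ 2 + z.im ^ 2 = ‖z‖ ^ 2 := by rw [Complex.sq_norm, normSq_apply]; ring
  rw [Real.cos_two_mul, cos_arg hz, cosTwoArg, hr, ← Complex.sq_norm_sub_sq_re]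
  field_simp
  ring

theorem abs_cosTwoArg_le_one (p : ℝ × ℝ) : |cosTwoArg p| ≤ 1 := by
  rw [cosTwoArg, abs_div, abs_of_nonneg (by positivity : 0 ≤ p.1 ^ 2 + p.2 ^ 2)]
  refine div_le_one_of_le₀ (abs_le.mpr ⟨?_, ?_⟩) (by positivity) <;>
    nlinarith [sq_nonneg p.1, sq_nonneg p.2]

theorem differentiableAt_ofReal_cosTwoArg {p : ℝ × ℝ} (hp : p.1 ^ 2 + p.2 ^ 2 ≠ 0) :
    DifferentiableAt ℝ (fun q => (cosTwoArg q : ℂ)) p := by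
  unfold cosTwoArg
  fun_prop (disch := exact hp)

theorem hasDerivAt_cosTwoArg_fst {p : ℝ × ℝ} (hp : p.1 ^ 2 + p.2 ^ 2 ≠ 0) :
    HasDerivAt (fun x => cosTwoArg (x, p.2)) (4 * p.1 * p.2 ^ 2 / (p.1 ^ 2 + p.2 ^ 2) ^ 2) p.1 :=
  (((hasDerivAt_pow 2 p.1).sub_const (p.2 ^ 2)).fun_div
    ((hasDerivAt_pow 2 p.1).add_const (p.2 ^ 2)) hp).congr_deriv (by field_simp; ring)

theorem hasDerivAt_cosTwoArg_snd {p : ℝ × ℝ} (hp : p.1 ^ 2 + p.2 ^ 2 ≠ 0) :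
    HasDerivAt (fun y => cosTwoArg (p.1, y))
      (-(4 * p.1 ^ 2 * p.2 / (p.1 ^ 2 + p.2 ^ 2) ^ 2)) p.2 :=
  (((hasDerivAt_pow 2 p.2).const_sub (p.1 ^ 2)).fun_div
    ((hasDerivAt_pow 2 p.2).const_add (p.1 ^ 2)) hp).congr_deriv (by field_simp; ring)

theorem dbar_ofReal_cosTwoArg {p : ℝ × ℝ} (hp : p.1 ^ 2 + p.2 ^ 2 ≠ 0) :
    dbar (fun q => (cosTwoArg q : ℂ)) p =
      2 * p.1 * p.2 * (p.2 - p.1 * I) / (p.1 ^ 2 + p.2 ^ 2) ^ 2 := by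
  rw [dbar_eq_of_hasDerivAt (differentiableAt_ofReal_cosTwoArg hp)
    (hasDerivAt_cosTwoArg_fst hp).ofReal_comp (hasDerivAt_cosTwoArg_snd hp).ofReal_comp]
  have hp' : ((p.1 : ℂ) ^ 2 + (p.2 : ℂ) ^ 2) ≠ 0 := by exact_mod_cast hp
  push_cast
  field_simp
  ring

theorem norm_dbar_ofReal_cosTwoArg_le {p : ℝ × ℝ} (hp : 0 < p.1 ^ 2 + p.2 ^ 2) :
    ‖dbar (fun q => (cosTwoArg q : ℂ)) p‖ ≤ (p.1 ^ 2 + p.2 ^ 2) ^ (-1 / 2 : ℝ) := by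
  set r := p.1 ^ 2 + p.2 ^ 2
  have hsq : (r ^ (-1 / 2 : ℝ)) ^ 2 = r⁻¹ := by
    rw [← rpow_natCast, ← rpow_mul hp.le]; norm_num [rpow_neg_one]
  have hfactor : 2 * p.1 * p.2 * (p.2 - p.1 * I) / ((p.1 : ℂ) ^ 2 + (p.2 : ℂ) ^ 2) ^ 2 =
      ((2 * p.1 * p.2 / r ^ 2 : ℝ) : ℂ) * (p.2 - p.1 * I) := by
    push_cast [r]; ring
  have hnormSq : normSq (((2 * p.1 * p.2 / r ^ 2 : ℝ) : ℂ) * (p.2 - p.1 * I)) =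
      4 * p.1 ^ 2 * p.2 ^ 2 / r ^ 3 := by
    rw [normSq_mul, normSq_ofReal]
    simp only [normSq_apply, sub_re, sub_im, ofReal_re, ofReal_im, mul_re, mul_im, I_re, I_im]
    field_simp
    ring
  rw [← pow_le_pow_iff_left₀ (norm_nonneg _) (by positivity) two_ne_zero, hsq,
    dbar_ofReal_cosTwoArg hp.ne', Complex.sq_norm, hfactor, hnormSq, div_le_iff₀ (by positivity)]
  calc 4 * p.1 ^ 2 * p.2 ^ 2 ≤ r ^ 2 := by nlinarith [sq_nonneg (p.1 ^ 2 - p.2 ^ 2)]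
    _ = r⁻¹ * r ^ 3 := by field_simp

theorem normSq_add_mul_I_sub_ofReal (x y z₀ : ℝ) :
    normSq ((x : ℂ) + (y : ℂ) * I - (z₀ : ℂ)) = (x - z₀) ^ 2 + y ^ 2 := by
  simp only [normSq_apply, sub_re, add_re, mul_re, ofReal_re, ofReal_im, I_re, I_im, sub_im,
    add_im, mul_im]
  ring

noncomputable def sectorExtension (q₀ : ℝ → ℂ) (z₀ : ℝ) (p : ℝ × ℝ) : ℂ :=
  (Real.cos (2 * Complex.arg ((p.1 : ℂ) + (p.2 : ℂ) * Complex.I - (z₀ : ℂ))) : ℂ) * q₀ p.1 +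
    (1 - (Real.cos (2 * Complex.arg ((p.1 : ℂ) + (p.2 : ℂ) * Complex.I - (z₀ : ℂ))) : ℂ)) * q₀ z₀

theorem sectorExtension_eventuallyEq (q₀ : ℝ → ℂ) {z₀ : ℝ} {p : ℝ × ℝ}
    (hp : 0 < (p.1 - z₀) ^ 2 + p.2 ^ 2) :
    sectorExtension q₀ z₀ =ᶠ[nhds p]
      fun q => (cosTwoArg (q - (z₀, 0)) : ℂ) * (q₀ q.1 - q₀ z₀) + q₀ z₀ := by
  have hopen : IsOpen {q : ℝ × ℝ | 0 < (q.1 - z₀) ^ 2 + q.2 ^ 2} :=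
    isOpen_lt continuous_const (by fun_prop)
  filter_upwards [hopen.mem_nhds hp] with q hq
  have hw : (q.1 : ℂ) + (q.2 : ℂ) * I - (z₀ : ℂ) ≠ 0 :=
    normSq_pos.1 ((normSq_add_mul_I_sub_ofReal _ _ _).symm ▸ hq)
  have hcoord : ((((q.1 : ℂ) + (q.2 : ℂ) * I - (z₀ : ℂ)).re,
      ((q.1 : ℂ) + (q.2 : ℂ) * I - (z₀ : ℂ)).im) : ℝ × ℝ) = q - (z₀, 0) := by
    ext <;> simp
  rw [sectorExtension, Complex.cos_two_mul_arg hw, hcoord]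
  ring

theorem dbar_sectorExtension {q₀ : ℝ → ℂ} {q₀' : ℂ} {z₀ : ℝ} {p : ℝ × ℝ}
    (hq₀ : HasDerivAt q₀ q₀' p.1) (hp : 0 < (p.1 - z₀) ^ 2 + p.2 ^ 2) :
    dbar (sectorExtension q₀ z₀) p =
      dbar (fun q => (cosTwoArg q : ℂ)) (p - (z₀, 0)) * (q₀ p.1 - q₀ z₀) +
        cosTwoArg (p - (z₀, 0)) * q₀' / 2 := by
  have hp' : (p - (z₀, 0)).1 ^ 2 + (p - (z₀, 0)).2 ^ 2 ≠ 0 := by simpa using hp.ne'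
  have hd : DifferentiableAt ℝ (fun q => (cosTwoArg (q - (z₀, 0)) : ℂ)) p :=
    (differentiableAt_comp_sub _).2 (differentiableAt_ofReal_cosTwoArg hp')
  rw [(sectorExtension_eventuallyEq q₀ hp).dbar_eq, dbar_add_const,
    dbar_mul_comp_fst hd (hq₀.sub_const _), dbar_comp_sub (fun q => (cosTwoArg q : ℂ))]

theorem dbar_extension_estimate_general (q₀ q₀' : ℝ → ℂ)
    (hderiv : ∀ x, HasDerivAt q₀ (q₀' x) x)
    (hq' : MemLp q₀' 2 (volume : Measure ℝ))
    (z₀ : ℝ)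
    (E : ℝ × ℝ → ℂ)
    (hE : ∀ p : ℝ × ℝ,
      E p = (Real.cos (2 * Complex.arg ((p.1 : ℂ) + (p.2 : ℂ) * Complex.I - (z₀ : ℂ))) : ℂ)
              * q₀ p.1 +
            (1 - (Real.cos (2 * Complex.arg ((p.1 : ℂ) + (p.2 : ℂ) * Complex.I - (z₀ : ℂ))) : ℂ))
              * q₀ z₀)
    (u v : ℝ)
    (hsector :
      (3 * π / 4 < Complex.arg ((u : ℂ) + (v : ℂ) * Complex.I - (z₀ : ℂ)) ∧
        Complex.arg ((u : ℂ) + (v : ℂ) * Complex.I - (z₀ : ℂ)) < π) ∨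
      (-π / 4 < Complex.arg ((u : ℂ) + (v : ℂ) * Complex.I - (z₀ : ℂ)) ∧
        Complex.arg ((u : ℂ) + (v : ℂ) * Complex.I - (z₀ : ℂ)) < 0)) :
    ‖(1 / 2 : ℂ) * ((fderiv ℝ E (u, v)) (1, 0) + Complex.I * (fderiv ℝ E (u, v)) (0, 1))‖ ≤
      (1 / 2) * ‖q₀' u‖ +
        (eLpNorm q₀' 2 (volume : Measure ℝ)).toReal *
          ((u - z₀) ^ 2 + v ^ 2) ^ (-(1 : ℝ) / 4) := by
  obtain rfl : E = sectorExtension q₀ z₀ := funext hE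
  have hw : (u : ℂ) + (v : ℂ) * I - (z₀ : ℂ) ≠ 0 := by
    intro h
    rw [h, arg_zero] at hsector
    rcases hsector with ⟨h, -⟩ | ⟨-, h⟩ <;> linarith [pi_pos]
  have hr : 0 < (u - z₀) ^ 2 + v ^ 2 := normSq_add_mul_I_sub_ofReal u v z₀ ▸ normSq_pos.2 hw
  set M := (eLpNorm q₀' 2 volume).toReal
  set r := (u - z₀) ^ 2 + v ^ 2
  have hdbar := norm_dbar_ofReal_cosTwoArg_le (p := (u - z₀, v)) hr
  have hcos := abs_cosTwoArg_le_one (u - z₀, v)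
  have hholder : ‖q₀ u - q₀ z₀‖ ≤ M * r ^ (1 / 4 : ℝ) :=
    (norm_sub_le_eLpNorm_deriv_mul_rpow hderiv hq' z₀ u).trans
      (mul_le_mul_of_nonneg_left (abs_rpow_half_le _ v) ENNReal.toReal_nonneg)
  change ‖dbar (sectorExtension q₀ z₀) (u, v)‖ ≤ _
  rw [dbar_sectorExtension (hderiv u) hr, Prod.mk_sub_mk, sub_zero]
  calc _ ≤ r ^ (-1 / 2 : ℝ) * (M * r ^ (1 / 4 : ℝ)) + 1 * ‖q₀' u‖ / 2 := by
        refine (norm_add_le _ _).trans (add_le_add ?_ ?_)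
        · rw [norm_mul]; gcongr
        · rw [norm_div, norm_mul, norm_real, norm_eq_abs, Complex.norm_two]; gcongr
    _ = _ := by
        rw [mul_left_comm, ← rpow_add hr]; norm_num; ring

/-- Bound on the `∂̄`-derivative of the extension
`E(u,v) = cos(2 arg(u+iv−z₀)) q̂₀(u) + (1 − cos(2 arg(u+iv−z₀))) q̂₀(z₀)`
in the sectors `3π/4 < arg(z−z₀) < π` and `−π/4 < arg(z−z₀) < 0`. -/
theorem dbar_extension_estimate (q₀ q₀' : ℝ → ℂ)
    (hderiv : ∀ x, HasDerivAt q₀ (q₀' x) x)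
    (hq : MemLp q₀ 2 (volume : Measure ℝ))
    (hq' : MemLp q₀' 2 (volume : Measure ℝ))
    (t z₀ : ℝ) (ht : 0 < t)
    (E : ℝ × ℝ → ℂ)
    (hE : ∀ p : ℝ × ℝ,
      E p = (Real.cos (2 * Complex.arg ((p.1 : ℂ) + (p.2 : ℂ) * Complex.I - (z₀ : ℂ))) : ℂ)
              * q₀ p.1 +
            (1 - (Real.cos (2 * Complex.arg ((p.1 : ℂ) + (p.2 : ℂ) * Complex.I - (z₀ : ℂ))) : ℂ))
              * q₀ z₀)
    (u v : ℝ)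
    (hsector :
      (3 * π / 4 < Complex.arg ((u : ℂ) + (v : ℂ) * Complex.I - (z₀ : ℂ)) ∧
        Complex.arg ((u : ℂ) + (v : ℂ) * Complex.I - (z₀ : ℂ)) < π) ∨
      (-π / 4 < Complex.arg ((u : ℂ) + (v : ℂ) * Complex.I - (z₀ : ℂ)) ∧
        Complex.arg ((u : ℂ) + (v : ℂ) * Complex.I - (z₀ : ℂ)) < 0)) :
    ‖(1 / 2 : ℂ) * ((fderiv ℝ E (u, v)) (1, 0) + Complex.I * (fderiv ℝ E (u, v)) (0, 1))‖ ≤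
      (1 / 2) * ‖q₀' u‖ +
        (eLpNorm q₀' 2 (volume : Measure ℝ)).toReal *
          ((u - z₀) ^ 2 + v ^ 2) ^ (-(1 : ℝ) / 4) :=
  dbar_extension_estimate_general q₀ q₀' hderiv hq' z₀ E hE u v hsector
end

section
/- Let r : ℝ → ℂ be measurable with |r(s)| ≤ ρ < 1 for all s, and suppose log(1 − |r(·)|²) ∈ L¹(ℝ). Define δ(z) := exp( (1/(2πi)) ∫_{−∞}^{z₀} log(1 − |r(s)|²)/(s − z) ds ) for Im z > 0. Then (1 − ρ²)^{1/2} ≤ |δ(z)| ≤ (1 − ρ²)^{−1/2}. -/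
/-!
For `z = u + iv` with `v > 0`, `Im (1 / (s - z)) = v / ((s - u)² + v²) = π p(s)`, where `p` is the
Cauchy density with location `u` and scale `v`. Hence `|δ(z)| = exp (½ ∫_{-∞}^{z₀} log (1 - |r|²) p)`. As `log (1 - ρ²) ≤ log (1 - |r|²) ≤ 0` and `p` is a probability density, the exponent
lies in `[½ log (1 - ρ²), 0]`.
-/

open MeasureTheory Real Complex ProbabilityTheory

lemma log_one_sub_sq_mem_Icc {x ρ : ℝ} (hx : 0 ≤ x) (hxρ : x ≤ ρ) (hρ : ρ < 1) :
    Real.log (1 - x ^ 2) ∈ Set.Icc (Real.log (1 - ρ ^ 2)) 0 :=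
  ⟨Real.log_le_log (by nlinarith) (by nlinarith),
    Real.log_nonpos (by nlinarith) (by nlinarith)⟩

lemma setIntegral_mul_density_mem_Icc {α : Type*} [MeasurableSpace α] {μ : Measure α}
    {f p : α → ℝ} {c : ℝ} (hp0 : ∀ x, 0 ≤ p x) (hp : Integrable p μ) (hp1 : ∫ x, p x ∂μ = 1)
    (hc : c ≤ 0) (hf : ∀ x, f x ∈ Set.Icc c 0) (S : Set α) :
    ∫ x in S, f x * p x ∂μ ∈ Set.Icc c 0 := by
  refine ⟨?_, integral_nonpos fun x => mul_nonpos_of_nonpos_of_nonneg (hf x).2 (hp0 x)⟩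
  have hmass : ∫ x in S, p x ∂μ ≤ 1 :=
    hp1 ▸ setIntegral_le_integral hp (Filter.Eventually.of_forall hp0)
  have hneg : ∫ x in S, -(f x * p x) ∂μ ≤ ∫ x in S, -c * p x ∂μ :=
    integral_mono_of_nonneg
      (Filter.Eventually.of_forall fun x => neg_nonneg.2 <|
        mul_nonpos_of_nonpos_of_nonneg (hf x).2 (hp0 x))
      (hp.const_mul _).integrableOn
      (Filter.Eventually.of_forall fun x => by
        nlinarith [(hf x).1, hp0 x])
  rw [integral_neg, integral_const_mul] at hneg
  nlinarith

lemma im_ofReal_div_ofReal_sub (a s : ℝ) {z : ℂ} (hz : 0 ≤ z.im) :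
    ((a : ℂ) / ((s : ℂ) - z)).im = π * (a * cauchyPDFReal z.re z.im.toNNReal s) := by
  rw [cauchyPDFReal_def, Real.coe_toNNReal _ hz, Complex.div_im, Complex.normSq_apply]
  simp only [ofReal_re, ofReal_im, sub_re, sub_im]
  field_simp
  ring

lemma integrable_ofReal_div_ofReal_sub {μ : Measure ℝ} {f : ℝ → ℝ} (hf : Integrable f μ)
    {z : ℂ} (hz : z.im ≠ 0) : Integrable (fun s => (f s : ℂ) / ((s : ℂ) - z)) μ := by
  have hbound : ∀ s : ℝ, ‖((s : ℂ) - z)⁻¹‖ ≤ |z.im|⁻¹ := fun s => by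
    rw [norm_inv]
    gcongr
    simpa using abs_im_le_norm ((s : ℂ) - z)
  simp_rw [div_eq_mul_inv]
  exact hf.ofReal.mul_bdd (by fun_prop) (Filter.Eventually.of_forall hbound)

lemma im_integral_ofReal_div_ofReal_sub {μ : Measure ℝ} {f : ℝ → ℝ} (hf : Integrable f μ)
    {z : ℂ} (hz : 0 < z.im) :
    (∫ s, (f s : ℂ) / ((s : ℂ) - z) ∂μ).im =
      π * ∫ s, f s * cauchyPDFReal z.re z.im.toNNReal s ∂μ := by
  rw [← integral_const_mul, ← RCLike.im_eq_complex_im,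
    ← integral_im (integrable_ofReal_div_ofReal_sub hf hz.ne')]
  simp only [RCLike.im_eq_complex_im, im_ofReal_div_ofReal_sub _ _ hz.le]

lemma norm_exp_one_div_two_pi_I_mul (w : ℂ) :
    ‖Complex.exp (1 / (2 * (π : ℂ) * I) * w)‖ = Real.exp (w.im / (2 * π)) := by
  rw [Complex.norm_exp]
  congr 1
  rw [show 1 / (2 * (π : ℂ) * I) * w = -I * w / (2 * π) by field_simp; rw [I_sq]; ring]
  rw [show (2 * (π : ℂ)) = ((2 * π : ℝ) : ℂ) by push_cast; ring, div_ofReal_re]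
  simp

theorem delta_modulus_bounds_general (r : ℝ → ℂ) (ρ z₀ : ℝ) (hρ : ρ < 1)
    (hr_bd : ∀ s, ‖r s‖ ≤ ρ)
    (hlog : Integrable (fun s => Real.log (1 - ‖r s‖ ^ 2)) (volume : Measure ℝ))
    (z : ℂ) (hz : 0 < z.im) :
    Real.sqrt (1 - ρ ^ 2) ≤
      ‖Complex.exp ((1 / (2 * (π : ℂ) * Complex.I)) *
        ∫ s in Set.Iio z₀, ((Real.log (1 - ‖r s‖ ^ 2) : ℂ) / ((s : ℂ) - z)))‖ ∧
    ‖Complex.exp ((1 / (2 * (π : ℂ) * Complex.I)) *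
        ∫ s in Set.Iio z₀, ((Real.log (1 - ‖r s‖ ^ 2) : ℂ) / ((s : ℂ) - z)))‖ ≤
      (Real.sqrt (1 - ρ ^ 2))⁻¹ := by
  have hρ0 : 0 ≤ ρ := (norm_nonneg _).trans (hr_bd 0)
  have hρ_sq : 0 < 1 - ρ ^ 2 := by nlinarith
  have hγ : z.im.toNNReal ≠ 0 := (Real.toNNReal_pos.2 hz).ne'
  obtain ⟨hlower, hupper⟩ := setIntegral_mul_density_mem_Icc
    (fun s => (cauchyPDF_pos z.re hγ s).le)
    (integrable_cauchyPDFReal _) (integral_cauchyPDFReal_eq_one _ hγ)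
    (Real.log_nonpos hρ_sq.le (by nlinarith))
    (fun s => log_one_sub_sq_mem_Icc (norm_nonneg (r s)) (hr_bd s) hρ) (Set.Iio z₀)
  set J := ∫ s in Set.Iio z₀, Real.log (1 - ‖r s‖ ^ 2) * cauchyPDFReal z.re z.im.toNNReal s
  have hexponent : π * J / (2 * π) = J / 2 := by field_simp
  rw [norm_exp_one_div_two_pi_I_mul, im_integral_ofReal_div_ofReal_sub hlog.integrableOn hz,
    hexponent, Real.sqrt_eq_rpow, Real.rpow_def_of_pos hρ_sq, ← Real.exp_neg]
  exact ⟨Real.exp_le_exp.2 (by linarith), Real.exp_le_exp.2 (by linarith)⟩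

/-- Bounds on the modulus of
`δ(z) = exp((1/(2πi)) ∫_{−∞}^{z₀} log(1−|r(s)|²)/(s−z) ds)` for `Im z > 0`:
`(1−ρ²)^{1/2} ≤ |δ(z)| ≤ (1−ρ²)^{−1/2}`. -/
theorem delta_modulus_bounds (r : ℝ → ℂ) (ρ z₀ : ℝ) (hρ : ρ < 1)
    (hr_meas : Measurable r) (hr_bd : ∀ s, ‖r s‖ ≤ ρ)
    (hlog : Integrable (fun s => Real.log (1 - ‖r s‖ ^ 2)) (volume : Measure ℝ))
    (z : ℂ) (hz : 0 < z.im) :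
    Real.sqrt (1 - ρ ^ 2) ≤
      ‖Complex.exp ((1 / (2 * (π : ℂ) * Complex.I)) *
        ∫ s in Set.Iio z₀, ((Real.log (1 - ‖r s‖ ^ 2) : ℂ) / ((s : ℂ) - z)))‖ ∧
    ‖Complex.exp ((1 / (2 * (π : ℂ) * Complex.I)) *
        ∫ s in Set.Iio z₀, ((Real.log (1 - ‖r s‖ ^ 2) : ℂ) / ((s : ℂ) - z)))‖ ≤
      (Real.sqrt (1 - ρ ^ 2))⁻¹ :=
  delta_modulus_bounds_general r ρ z₀ hρ hr_bd hlog z hz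
end

section
/- For every t > 0 and every v ∈ ℝ, ∫_ℝ e^{−8tV²} |V − v|^{−1/2} dV ≤ C t^{−1/4}, where C is an absolute constant independent of v and t. -/
/-!
Split the line at distance `r` from the singularity `v`. Near `v`, bound the Gaussian by `1` and
integrate `|x - v| ^ p` exactly; away from `v`, bound `|x - v| ^ p` by `r ^ p` and integrate the
Gaussian. For `exp (-b x²)` the scale `r = b ^ (-1/2)` makes both pieces of order
`b ^ (-(p + 1) / 2)`, which for `b = 8t`, `p = -1/2` is `t ^ (-1/4)` up to a constant.
-/

open MeasureTheory Set Real

section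
variable {p r : ℝ}

lemma intervalIntegrable_abs_rpow (hp : -1 < p) (a b : ℝ) :
    IntervalIntegrable (fun x : ℝ => |x| ^ p) volume a b := by
  have from_zero_of_nonneg : ∀ c, 0 ≤ c → IntervalIntegrable (fun x : ℝ => |x| ^ p) volume 0 c :=
    fun c hc => (intervalIntegral.intervalIntegrable_rpow' hp).congr fun x hx => by
      rw [uIoc_of_le hc] at hx
      simp only [abs_of_pos hx.1]
  have from_zero : ∀ c, IntervalIntegrable (fun x : ℝ => |x| ^ p) volume 0 c := by
    intro c
    rcases le_total 0 c with hc | hc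
    · exact from_zero_of_nonneg c hc
    · rw [IntervalIntegrable.iff_comp_neg]
      simpa only [abs_neg, neg_zero] using from_zero_of_nonneg (-c) (neg_nonneg.2 hc)
  exact (from_zero a).symm.trans (from_zero b)

lemma integral_abs_rpow_Ioc (hp : -1 < p) (hr : 0 ≤ r) :
    ∫ x in Ioc (-r) r, |x| ^ p = 2 * r ^ (p + 1) / (p + 1) := by
  have half : ∫ x in (0 : ℝ)..r, |x| ^ p = r ^ (p + 1) / (p + 1) := by
    rw [intervalIntegral.integral_congr (g := fun x => x ^ p) fun x hx => by
      rw [uIcc_of_le hr] at hx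
      simp only [abs_of_nonneg hx.1], integral_rpow (Or.inl hp),
      zero_rpow (by linarith), sub_zero]
  have symm : ∫ x in -r..0, |x| ^ p = ∫ x in (0 : ℝ)..r, |x| ^ p := by
    simpa only [abs_neg, neg_zero] using
      (intervalIntegral.integral_comp_neg (a := 0) (b := r) fun x => |x| ^ p).symm
  rw [← intervalIntegral.integral_of_le (by linarith),
    ← intervalIntegral.integral_add_adjacent_intervals (intervalIntegrable_abs_rpow hp _ _)
      (intervalIntegrable_abs_rpow hp _ _), symm, half]
  ring

theorem integral_mul_abs_rpow_le {g : ℝ → ℝ} {M : ℝ} (hg : Integrable g) (hg0 : ∀ x, 0 ≤ g x)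
    (hgM : ∀ x, g x ≤ M) (hp : -1 < p) (hp0 : p ≤ 0) (hr : 0 < r) :
    ∫ x, g x * |x| ^ p ≤ M * (2 * r ^ (p + 1) / (p + 1)) + (∫ x, g x) * r ^ p := by
  by_cases hf : Integrable fun x => g x * |x| ^ p
  swap
  · have hM : 0 ≤ M := (hg0 0).trans (hgM 0)
    rw [integral_undef hf]
    have hg_int : 0 ≤ ∫ x, g x := integral_nonneg hg0
    have hp1 : 0 < p + 1 := by linarith
    positivity
  have near : ∫ x in Ioc (-r) r, g x * |x| ^ p ≤ M * (2 * r ^ (p + 1) / (p + 1)) := by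
    rw [← integral_abs_rpow_Ioc hp hr.le, ← integral_const_mul]
    exact setIntegral_mono_on hf.integrableOn
      ((intervalIntegrable_abs_rpow hp (-r) r).1.const_mul M) measurableSet_Ioc
      fun x _ => mul_le_mul_of_nonneg_right (hgM x) (rpow_nonneg (abs_nonneg x) p)
  have far : ∫ x in (Ioc (-r) r)ᶜ, g x * |x| ^ p ≤ (∫ x, g x) * r ^ p := by
    rw [← integral_mul_const]
    refine (setIntegral_mono_on hf.integrableOn (hg.mul_const _).integrableOn
      measurableSet_Ioc.compl fun x hx => ?_).trans
      (setIntegral_le_integral (hg.mul_const _) (.of_forall fun x =>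
        mul_nonneg (hg0 x) (rpow_nonneg hr.le p)))
    have hrx : r ≤ |x| := by
      simp only [mem_compl_iff, mem_Ioc, not_and_or, not_lt, not_le] at hx
      rcases hx with hx | hx
      · rw [abs_of_nonpos (by linarith)]; linarith
      · rw [abs_of_pos (by linarith)]; linarith
    exact mul_le_mul_of_nonneg_left (rpow_le_rpow_of_nonpos hr hrx hp0) (hg0 x)
  rw [← integral_add_compl measurableSet_Ioc hf]
  exact add_le_add near far

theorem integral_mul_abs_sub_rpow_le {g : ℝ → ℝ} {M : ℝ} (hg : Integrable g) (hg0 : ∀ x, 0 ≤ g x)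
    (hgM : ∀ x, g x ≤ M) (hp : -1 < p) (hp0 : p ≤ 0) (hr : 0 < r) (v : ℝ) :
    ∫ x, g x * |x - v| ^ p ≤ M * (2 * r ^ (p + 1) / (p + 1)) + (∫ x, g x) * r ^ p := by
  rw [← integral_add_right_eq_self (fun x => g x * |x - v| ^ p) v, ← integral_add_right_eq_self g v]
  simpa only [add_sub_cancel_right] using
    integral_mul_abs_rpow_le (hg.comp_add_right v) (fun _ => hg0 _) (fun _ => hgM _) hp hp0 hr

theorem integral_gaussian_mul_abs_sub_rpow_le {b : ℝ} (hb : 0 < b) (hp : -1 < p) (hp0 : p ≤ 0)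
    (v : ℝ) :
    ∫ x, exp (-b * x ^ 2) * |x - v| ^ p ≤ (2 / (p + 1) + √π) * b ^ (-(p + 1) / 2) := by
  have hgauss : Integrable fun x : ℝ => exp (-b * x ^ 2) := integrable_exp_neg_mul_sq hb
  have bound := integral_mul_abs_sub_rpow_le (M := 1) (r := b ^ (-(1 : ℝ) / 2)) hgauss
    (fun _ => (exp_pos _).le) (fun x => exp_le_one_iff.2 (by nlinarith [sq_nonneg x]))
    hp hp0 (rpow_pos_of_pos hb _) v
  refine bound.trans (le_of_eq ?_)
  rw [integral_gaussian, sqrt_div' _ hb.le, sqrt_eq_rpow b, ← rpow_mul hb.le, ← rpow_mul hb.le,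
    div_eq_mul_inv √π, ← rpow_neg hb.le, mul_assoc, ← rpow_add hb,
    show -(1 : ℝ) / 2 * (p + 1) = -(p + 1) / 2 by ring,
    show -(1 / 2 : ℝ) + -1 / 2 * p = -(p + 1) / 2 by ring]
  ring

end

/-- There is an absolute constant `C` such that for all `t > 0` and `v ∈ ℝ`,
`∫_ℝ e^{−8tV²} |V − v|^{−1/2} dV ≤ C t^{−1/4}`. -/
theorem gaussian_inverse_sqrt_estimate :
    ∃ C : ℝ, 0 < C ∧ ∀ t : ℝ, 0 < t → ∀ v : ℝ,
      (∫ V : ℝ, Real.exp (-8 * t * V ^ 2) * |V - v| ^ (-(1 : ℝ) / 2)) ≤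
        C * t ^ (-(1 : ℝ) / 4) := by
  refine ⟨(4 + √π) * 8 ^ (-(1 : ℝ) / 4), by positivity, fun t ht v => ?_⟩
  calc ∫ V : ℝ, exp (-8 * t * V ^ 2) * |V - v| ^ (-(1 : ℝ) / 2)
      = ∫ V : ℝ, exp (-(8 * t) * V ^ 2) * |V - v| ^ (-(1 : ℝ) / 2) := by simp only [neg_mul]
    _ ≤ (2 / (-1 / 2 + 1) + √π) * (8 * t) ^ (-(-(1 : ℝ) / 2 + 1) / 2) :=
      integral_gaussian_mul_abs_sub_rpow_le (by positivity) (by norm_num) (by norm_num) v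
    _ = (4 + √π) * 8 ^ (-(1 : ℝ) / 4) * t ^ (-(1 : ℝ) / 4) := by
      rw [mul_rpow (by norm_num) ht.le]
      norm_num
      ring
end

section
/- Let 1 < q < 2 < p < ∞ with 1/p + 1/q = 1. Then for every t > 0 and v ∈ ℝ, ∫_ℝ e^{−8tV²} |V|^{1/p − 1/2} |V − v|^{1/q − 1} dV ≤ C(p) t^{−1/4}, where C(p) is a constant depending only on p (not on v or t). -/
/-!
Both exponents `a = 1/p - 1/2` and `b = 1/q - 1 = -1/p` are negative, so comparing with the
smaller of `|V|` and `|V - v|` gives `|V|^a |V - v|^b ≤ |V|^(a+b) + |V - v|^(a+b)`, where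
`a + b = -1/2`. Each of these singular terms is cut at the Gaussian scale `r = (8t)^(-1/2)`: inside
the cut the Gaussian is at most `1` and `∫_{|u| ≤ r} |u|^(-1/2) = 4 r^(1/2)`, outside it
`|u|^(-1/2) ≤ r^(-1/2)` and the Gaussian integrates to `√(π / 8t)`. Both contributions are
multiples of `t^(-1/4)`.
-/

open MeasureTheory Real Set

lemma rpow_mul_rpow_le_rpow_add_add_rpow_add {x y a b : ℝ} (hx : 0 ≤ x) (hy : 0 ≤ y)
    (ha : a < 0) (hb : b < 0) : x ^ a * y ^ b ≤ x ^ (a + b) + y ^ (a + b) := by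
  wlog hxy : x ≤ y generalizing x y a b
  · simpa only [mul_comm, add_comm] using this hy hx hb ha (le_of_not_ge hxy)
  rcases hx.eq_or_lt with rfl | hx
  · rw [zero_rpow ha.ne, zero_mul]
    positivity
  calc x ^ a * y ^ b ≤ x ^ a * x ^ b :=
        mul_le_mul_of_nonneg_left (rpow_le_rpow_of_nonpos hx hxy hb.le) (by positivity)
    _ = x ^ (a + b) := (rpow_add hx a b).symm
    _ ≤ x ^ (a + b) + y ^ (a + b) := le_add_of_nonneg_right (by positivity)

lemma mul_rpow_le_indicator_Iic_rpow_add {E x r c : ℝ} (hE0 : 0 ≤ E) (hE1 : E ≤ 1)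
    (hx : 0 ≤ x) (hr : 0 < r) (hc : c ≤ 0) :
    E * x ^ c ≤ (Iic r).indicator (· ^ c) x + r ^ c * E := by
  by_cases hxr : x ≤ r
  · rw [indicator_of_mem (mem_Iic.2 hxr)]
    have : E * x ^ c ≤ x ^ c := mul_le_of_le_one_left (by positivity) hE1
    have : 0 ≤ r ^ c * E := by positivity
    linarith
  · rw [indicator_of_notMem (by simpa using hxr), zero_add, mul_comm]
    exact mul_le_mul_of_nonneg_right (rpow_le_rpow_of_nonpos hr (le_of_not_ge hxr) hc) hE0

lemma indicator_Iic_rpow_comp_abs (r c : ℝ) :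
    (fun u : ℝ => (Iic r).indicator (· ^ c) |u|) =
      (Icc (-r) r).indicator (fun u => |u| ^ c) := by
  ext u
  by_cases hu : |u| ≤ r
  · simp [indicator_of_mem, hu, abs_le.1 hu]
  · rw [indicator_of_notMem (by simpa using hu), indicator_of_notMem]
    simpa [← abs_le] using hu

lemma locallyIntegrable_abs_rpow {c : ℝ} (hc : -1 < c) :
    LocallyIntegrable (fun u : ℝ => |u| ^ c) :=
  locallyIntegrable_of_norm_le_rpow (C := 1) (α := -c) (by simp)
    (by rw [Module.finrank_self, Nat.cast_one]; linarith)
    (ae_of_all _ fun u => by simp [abs_rpow_of_nonneg (abs_nonneg u)])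
    (continuous_abs.measurable.pow_const c).aestronglyMeasurable

lemma integrable_indicator_Iic_rpow_comp_abs {c : ℝ} (hc : -1 < c) (r : ℝ) :
    Integrable (fun u : ℝ => (Iic r).indicator (· ^ c) |u|) := by
  rw [indicator_Iic_rpow_comp_abs, integrable_indicator_iff measurableSet_Icc]
  exact (locallyIntegrable_abs_rpow hc).integrableOn_isCompact isCompact_Icc

lemma integral_indicator_Iic_rpow_comp_abs {c r : ℝ} (hc : -1 < c) (hr : 0 ≤ r) :
    ∫ u : ℝ, (Iic r).indicator (· ^ c) |u| = 2 * r ^ (c + 1) / (c + 1) := by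
  rw [integral_comp_abs (f := (Iic r).indicator (· ^ c)), integral_indicator measurableSet_Iic,
    Measure.restrict_restrict measurableSet_Iic, Iic_inter_Ioi,
    ← intervalIntegral.integral_of_le hr, integral_rpow (Or.inl hc), zero_rpow (by linarith)]
  ring

lemma exp_neg_mul_sq_mul_abs_sub_rpow_le {l c r : ℝ} (hl : 0 < l) (hr : 0 < r) (hc : c ≤ 0)
    (w V : ℝ) :
    exp (-l * V ^ 2) * |V - w| ^ c ≤
      (Iic r).indicator (· ^ c) |V - w| + r ^ c * exp (-l * V ^ 2) :=
  mul_rpow_le_indicator_Iic_rpow_add (exp_pos _).le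
    (exp_le_one_iff.2 (by nlinarith [sq_nonneg V])) (abs_nonneg _) hr hc

lemma integrable_exp_neg_mul_sq_mul_abs_sub_rpow {l c : ℝ} (hl : 0 < l) (hc : -1 < c)
    (hc0 : c ≤ 0) (w : ℝ) : Integrable (fun V => exp (-l * V ^ 2) * |V - w| ^ c) := by
  refine Integrable.mono' (((integrable_indicator_Iic_rpow_comp_abs hc 1).comp_sub_right w).add
    ((integrable_exp_neg_mul_sq hl).const_mul (1 ^ c))) (by fun_prop) (ae_of_all _ fun V => ?_)
  rw [Real.norm_of_nonneg (by positivity)]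
  exact exp_neg_mul_sq_mul_abs_sub_rpow_le hl one_pos hc0 w V

lemma integral_exp_neg_mul_sq_mul_abs_sub_rpow_le {l c : ℝ} (hl : 0 < l) (hc : -1 < c)
    (hc0 : c ≤ 0) (w : ℝ) :
    ∫ V, exp (-l * V ^ 2) * |V - w| ^ c ≤ (2 / (c + 1) + √π) * l ^ (-(c + 1) / 2) := by
  set r := l ^ (-(1 : ℝ) / 2)
  have hr : 0 < r := rpow_pos_of_pos hl _
  have hind := (integrable_indicator_Iic_rpow_comp_abs hc r).comp_sub_right w
  have hgauss := (integrable_exp_neg_mul_sq hl).const_mul (r ^ c)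
  calc ∫ V, exp (-l * V ^ 2) * |V - w| ^ c
      ≤ ∫ V, ((Iic r).indicator (· ^ c) |V - w| + r ^ c * exp (-l * V ^ 2)) :=
        integral_mono_of_nonneg (ae_of_all _ fun V => by positivity) (hind.add hgauss)
          (ae_of_all _ (exp_neg_mul_sq_mul_abs_sub_rpow_le hl hr hc0 w))
    _ = 2 * r ^ (c + 1) / (c + 1) + r ^ c * √(π / l) := by
        rw [integral_add hind hgauss,
          integral_sub_right_eq_self (fun u => (Iic r).indicator (· ^ c) |u|),
          integral_indicator_Iic_rpow_comp_abs hc hr.le, integral_const_mul, integral_gaussian]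
    _ = (2 / (c + 1) + √π) * r ^ (c + 1) := by
        have hsqrt : √(π / l) = √π * r := by
          rw [sqrt_div' _ hl.le, sqrt_eq_rpow l, div_eq_mul_inv, ← rpow_neg hl.le]
          norm_num [r]
        rw [hsqrt, rpow_add_one hr.ne']
        ring
    _ = (2 / (c + 1) + √π) * l ^ (-(c + 1) / 2) := by
        rw [← rpow_mul hl.le]
        ring_nf

theorem integral_exp_neg_mul_sq_mul_abs_sub_rpow_mul_abs_sub_rpow_le {l a b : ℝ} (hl : 0 < l)
    (ha : a < 0) (hb : b < 0) (hab : -1 < a + b) (w₁ w₂ : ℝ) :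
    ∫ V, exp (-l * V ^ 2) * |V - w₁| ^ a * |V - w₂| ^ b ≤
      2 * (2 / (a + b + 1) + √π) * l ^ (-(a + b + 1) / 2) := by
  have hint := fun w => integrable_exp_neg_mul_sq_mul_abs_sub_rpow hl hab (by linarith) w
  calc ∫ V, exp (-l * V ^ 2) * |V - w₁| ^ a * |V - w₂| ^ b
      ≤ ∫ V, (exp (-l * V ^ 2) * |V - w₁| ^ (a + b) +
          exp (-l * V ^ 2) * |V - w₂| ^ (a + b)) := by
        refine integral_mono_of_nonneg (ae_of_all _ fun V => by positivity)
          ((hint w₁).add (hint w₂)) (ae_of_all _ fun V => ?_)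
        dsimp only
        rw [mul_assoc, ← mul_add]
        exact mul_le_mul_of_nonneg_left
          (rpow_mul_rpow_le_rpow_add_add_rpow_add (abs_nonneg _) (abs_nonneg _) ha hb)
          (exp_pos _).le
    _ ≤ _ := by
        rw [integral_add (hint w₁) (hint w₂), two_mul, add_mul]
        gcongr <;> exact integral_exp_neg_mul_sq_mul_abs_sub_rpow_le hl hab (by linarith) _

theorem gaussian_holder_weight_estimate_general (p q : ℝ) (hp : 2 < p)
    (hpq : 1 / p + 1 / q = 1) :
    ∃ C : ℝ, 0 < C ∧ ∀ t : ℝ, 0 < t → ∀ v : ℝ,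
      (∫ V : ℝ, Real.exp (-8 * t * V ^ 2) * |V| ^ (1 / p - 1 / 2) * |V - v| ^ (1 / q - 1)) ≤
        C * t ^ (-(1 : ℝ) / 4) := by
  have hp_inv : 0 < 1 / p := by positivity
  have ha : 1 / p - 1 / 2 < 0 := by
    have : 1 / p < 1 / 2 := one_div_lt_one_div_of_lt two_pos hp
    linarith
  have hab : 1 / p - 1 / 2 + (1 / q - 1) = -1 / 2 := by linarith
  refine ⟨2 * (4 + √π) * 8 ^ (-(1 : ℝ) / 4), by positivity, fun t ht v => ?_⟩
  calc _ = ∫ V : ℝ, exp (-(8 * t) * V ^ 2) * |V - 0| ^ (1 / p - 1 / 2) *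
          |V - v| ^ (1 / q - 1) := by
        simp only [neg_mul, sub_zero]
    _ ≤ 2 * (2 / (1 / p - 1 / 2 + (1 / q - 1) + 1) + √π) *
          (8 * t) ^ (-(1 / p - 1 / 2 + (1 / q - 1) + 1) / 2) :=
        integral_exp_neg_mul_sq_mul_abs_sub_rpow_mul_abs_sub_rpow_le (by positivity) ha
          (by linarith) (by linarith) 0 v
    _ = _ := by
        rw [hab, mul_rpow (by norm_num) ht.le]
        ring_nf

/-- For conjugate exponents `1 < q < 2 < p < ∞`, there is a constant `C(p)` such that
for all `t > 0` and `v ∈ ℝ`,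
`∫_ℝ e^{−8tV²} |V|^{1/p−1/2} |V−v|^{1/q−1} dV ≤ C(p) t^{−1/4}`. -/
theorem gaussian_holder_weight_estimate (p q : ℝ) (hq : 1 < q) (hq2 : q < 2) (hp : 2 < p)
    (hpq : 1 / p + 1 / q = 1) :
    ∃ C : ℝ, 0 < C ∧ ∀ t : ℝ, 0 < t → ∀ v : ℝ,
      (∫ V : ℝ, Real.exp (-8 * t * V ^ 2) * |V| ^ (1 / p - 1 / 2) * |V - v| ^ (1 / q - 1)) ≤
        C * t ^ (-(1 : ℝ) / 4) :=
  gaussian_holder_weight_estimate_general p q hp hpq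
end

section
/- Let t > 0 and z₀ ∈ ℝ. Then ∬_{Ω₃∪Ω₆} e^{8t(U−z₀)V} ((U−z₀)² + V²)^{−1/4} dA(U,V) ≤ C t^{−3/4} for an absolute constant C, where Ω₃ = {3π/4 < arg(z−z₀) < π} and Ω₆ = {−π/4 < arg(z−z₀) < 0}. -/
/-!
After translating `z₀` to `0`, the two sectors are where `|V| < |U|` and `UV < 0`; hence
`8tUV = -8t|U||V| ≤ -4t|U||V| - 4tV²`, while `(U² + V²)^(-1/4) ≤ |U|^(-1/2)`. The resulting
majorant is integrated over the whole plane by Tonelli: in `U` it gives `2 Γ(1/2) (4t|V|)^(-1/2)`,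
and then in `V` the factor `|V|^(-1/2) e^(-4tV²)` gives `Γ(1/4) (4t)^(-1/4)`, so the integral is
at most `2 Γ(1/2) Γ(1/4) (4t)^(-3/4)`.
-/

open MeasureTheory Real Set

theorem integrable_comp_abs_of_integrableOn_Ioi {f : ℝ → ℝ} (hf : IntegrableOn f (Ioi 0)) :
    Integrable fun x => f |x| := by
  have h_Ioi : IntegrableOn (fun x => f |x|) (Ioi 0) :=
    hf.congr_fun (fun x hx => by rw [abs_of_pos hx]) measurableSet_Ioi
  have h_Iic : IntegrableOn (fun x => f |x|) (Iic 0) := by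
    have h_neg : MeasurableEmbedding (Neg.neg : ℝ → ℝ) := (Homeomorph.neg ℝ).measurableEmbedding
    rw [← Measure.map_neg_eq_self (volume : Measure ℝ), h_neg.integrableOn_map_iff]
    simp_rw [Function.comp_def, abs_neg, neg_preimage, neg_Iic, neg_zero]
    exact (integrableOn_Ici_iff_integrableOn_Ioi).mpr h_Ioi
  rw [← integrableOn_univ, ← Iic_union_Ioi (a := (0 : ℝ))]
  exact h_Iic.union h_Ioi

theorem lintegral_ofReal_comp_abs {f : ℝ → ℝ} (hf : IntegrableOn f (Ioi 0))
    (hf_nonneg : ∀ x, 0 ≤ x → 0 ≤ f x) :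
    ∫⁻ x, ENNReal.ofReal (f |x|) = ENNReal.ofReal (2 * ∫ x in Ioi 0, f x) := by
  rw [← integral_comp_abs, ofReal_integral_eq_lintegral_ofReal
    (integrable_comp_abs_of_integrableOn_Ioi hf) (ae_of_all _ fun x => hf_nonneg _ (abs_nonneg x))]

theorem lintegral_abs_rpow_mul_exp_neg_mul_abs_rpow {p q b : ℝ} (hp : 0 < p) (hq : -1 < q)
    (hb : 0 < b) :
    ∫⁻ x : ℝ, ENNReal.ofReal (|x| ^ q * exp (-b * |x| ^ p)) =
      ENNReal.ofReal (2 * (b ^ (-(q + 1) / p) * (1 / p) * Gamma ((q + 1) / p))) := by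
  rw [lintegral_ofReal_comp_abs (f := fun x => x ^ q * exp (-b * x ^ p))
      (integrableOn_rpow_mul_exp_neg_mul_rpow hq hp hb) (fun x hx => by positivity),
    integral_rpow_mul_exp_neg_mul_rpow hp hq hb]

/-- The union `Ω₃ ∪ Ω₆` of the paper for `z₀ = 0`. -/
def omega36 : Set (ℝ × ℝ) := {P | (0 < P.2 ∧ P.1 < -P.2) ∨ (P.2 < 0 ∧ -P.2 < P.1)}

theorem measurableSet_omega36 : MeasurableSet omega36 :=
  ((measurableSet_lt measurable_const measurable_snd).inter
      (measurableSet_lt measurable_fst measurable_snd.neg)).union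
    ((measurableSet_lt measurable_snd measurable_const).inter
      (measurableSet_lt measurable_snd.neg measurable_fst))

theorem abs_snd_lt_abs_fst_of_mem_omega36 {P : ℝ × ℝ} (hP : P ∈ omega36) : |P.2| < |P.1| := by
  rcases hP with ⟨hv, hu⟩ | ⟨hv, hu⟩
  · rw [abs_of_pos hv, abs_of_neg (by linarith)]; linarith
  · rw [abs_of_neg hv, abs_of_pos (by linarith)]; linarith

theorem fst_mul_snd_of_mem_omega36 {P : ℝ × ℝ} (hP : P ∈ omega36) :
    P.1 * P.2 = -(|P.1| * |P.2|) := by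
  rcases hP with ⟨hv, hu⟩ | ⟨hv, hu⟩
  · rw [abs_of_pos hv, abs_of_neg (by linarith)]; ring
  · rw [abs_of_neg hv, abs_of_pos (by linarith)]; ring

noncomputable def sectorIntegrand (t : ℝ) (P : ℝ × ℝ) : ℝ :=
  exp (8 * t * P.1 * P.2) * (P.1 ^ 2 + P.2 ^ 2) ^ (-(1 : ℝ) / 4)

noncomputable def sectorMajorant (t : ℝ) (P : ℝ × ℝ) : ℝ :=
  |P.1| ^ (-(1 : ℝ) / 2) * exp (-(4 * t * |P.2|) * |P.1|) * exp (-(4 * t) * |P.2| ^ (2 : ℝ))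

theorem sectorIntegrand_le_sectorMajorant {t : ℝ} (ht : 0 ≤ t) {P : ℝ × ℝ} (hP : P ∈ omega36) :
    sectorIntegrand t P ≤ sectorMajorant t P := by
  have hvu := abs_snd_lt_abs_fst_of_mem_omega36 hP
  have hu : 0 < |P.1| := (abs_nonneg _).trans_lt hvu
  have h_exp : exp (8 * t * P.1 * P.2) ≤
      exp (-(4 * t * |P.2|) * |P.1|) * exp (-(4 * t) * |P.2| ^ (2 : ℝ)) := by
    rw [← exp_add, exp_le_exp, rpow_two, mul_assoc (8 * t), fst_mul_snd_of_mem_omega36 hP]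
    have h_sq : t * (|P.2| * |P.2|) ≤ t * (|P.2| * |P.1|) :=
      mul_le_mul_of_nonneg_left (mul_le_mul_of_nonneg_left hvu.le (abs_nonneg _)) ht
    nlinarith
  have h_rpow : (P.1 ^ 2 + P.2 ^ 2) ^ (-(1 : ℝ) / 4) ≤ |P.1| ^ (-(1 : ℝ) / 2) :=
    calc (P.1 ^ 2 + P.2 ^ 2) ^ (-(1 : ℝ) / 4) ≤ (|P.1| ^ (2 : ℝ)) ^ (-(1 : ℝ) / 4) := by
          rw [rpow_two, sq_abs]
          exact rpow_le_rpow_of_nonpos (by rw [← sq_abs]; exact pow_pos hu 2) (by nlinarith)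
            (by norm_num)
      _ = |P.1| ^ (-(1 : ℝ) / 2) := by rw [← rpow_mul (abs_nonneg _)]; norm_num
  calc sectorIntegrand t P
      ≤ (exp (-(4 * t * |P.2|) * |P.1|) * exp (-(4 * t) * |P.2| ^ (2 : ℝ))) *
          |P.1| ^ (-(1 : ℝ) / 2) :=
        mul_le_mul h_exp h_rpow (by positivity) (by positivity)
    _ = sectorMajorant t P := by unfold sectorMajorant; ring

theorem lintegral_sectorMajorant_fst {t v : ℝ} (ht : 0 < t) (hv : v ≠ 0) :
    ∫⁻ u, ENNReal.ofReal (sectorMajorant t (u, v)) =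
      ENNReal.ofReal (2 * Gamma (1 / 2) * (4 * t) ^ (-(1 : ℝ) / 2) *
        (|v| ^ (-(1 : ℝ) / 2) * exp (-(4 * t) * |v| ^ (2 : ℝ)))) := by
  have hb : 0 < 4 * t * |v| := by positivity
  calc ∫⁻ u, ENNReal.ofReal (sectorMajorant t (u, v))
      = ∫⁻ u, ENNReal.ofReal (|u| ^ (-(1 : ℝ) / 2) * exp (-(4 * t * |v|) * |u| ^ (1 : ℝ))) *
          ENNReal.ofReal (exp (-(4 * t) * |v| ^ (2 : ℝ))) := by
        congr! 2 with u
        rw [sectorMajorant, rpow_one, ENNReal.ofReal_mul (by positivity)]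
    _ = ENNReal.ofReal (2 * ((4 * t * |v|) ^ (-(-(1 : ℝ) / 2 + 1) / 1) * (1 / 1) *
          Gamma ((-(1 : ℝ) / 2 + 1) / 1))) * ENNReal.ofReal (exp (-(4 * t) * |v| ^ (2 : ℝ))) := by
        rw [lintegral_mul_const' _ _ ENNReal.ofReal_ne_top,
          lintegral_abs_rpow_mul_exp_neg_mul_abs_rpow one_pos (by norm_num) hb]
    _ = _ := by
        rw [← ENNReal.ofReal_mul (by positivity), mul_rpow (by positivity) (abs_nonneg v)]
        norm_num
        ring_nf

theorem lintegral_sectorMajorant {t : ℝ} (ht : 0 < t) :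
    ∫⁻ P, ENNReal.ofReal (sectorMajorant t P) =
      ENNReal.ofReal (2 * Gamma (1 / 2) * Gamma (1 / 4) * (4 * t) ^ (-(3 : ℝ) / 4)) := by
  have h_meas : Measurable fun P => ENNReal.ofReal (sectorMajorant t P) := by
    unfold sectorMajorant; fun_prop
  rw [Measure.volume_eq_prod, lintegral_prod_symm _ h_meas.aemeasurable]
  calc ∫⁻ v, ∫⁻ u, ENNReal.ofReal (sectorMajorant t (u, v))
      = ∫⁻ v, ENNReal.ofReal (2 * Gamma (1 / 2) * (4 * t) ^ (-(1 : ℝ) / 2)) *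
          ENNReal.ofReal (|v| ^ (-(1 : ℝ) / 2) * exp (-(4 * t) * |v| ^ (2 : ℝ))) := by
        refine lintegral_congr_ae ?_
        filter_upwards [compl_mem_ae_iff.mpr (measure_singleton (0 : ℝ))] with v hv
        rw [lintegral_sectorMajorant_fst ht hv, ENNReal.ofReal_mul (by positivity)]
    _ = _ := by
        rw [lintegral_const_mul' _ _ ENNReal.ofReal_ne_top,
          lintegral_abs_rpow_mul_exp_neg_mul_abs_rpow two_pos (by norm_num) (by positivity),
          ← ENNReal.ofReal_mul (by positivity)]
        congr 1
        have h_exp : (4 * t) ^ (-(1 : ℝ) / 2) * (4 * t) ^ (-(-(1 : ℝ) / 2 + 1) / 2) =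
            (4 * t) ^ (-(3 : ℝ) / 4) := by
          rw [← rpow_add (by positivity)]; norm_num
        rw [← h_exp]
        norm_num
        ring

theorem setIntegral_omega36_sectorIntegrand_le {t : ℝ} (ht : 0 < t) :
    ∫ P in omega36, sectorIntegrand t P ≤
      2 * Gamma (1 / 2) * Gamma (1 / 4) * (4 * t) ^ (-(3 : ℝ) / 4) := by
  have h_meas : Measurable (sectorIntegrand t) := by unfold sectorIntegrand; fun_prop
  rw [integral_eq_lintegral_of_nonneg_ae
    (ae_of_all _ fun P => by unfold sectorIntegrand; positivity) h_meas.aestronglyMeasurable]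
  refine ENNReal.toReal_le_of_le_ofReal (by positivity) ?_
  calc ∫⁻ P in omega36, ENNReal.ofReal (sectorIntegrand t P)
      ≤ ∫⁻ P in omega36, ENNReal.ofReal (sectorMajorant t P) :=
        setLIntegral_mono' measurableSet_omega36 fun P hP =>
          ENNReal.ofReal_le_ofReal (sectorIntegrand_le_sectorMajorant ht.le hP)
    _ ≤ ∫⁻ P, ENNReal.ofReal (sectorMajorant t P) := setLIntegral_le_lintegral _ _
    _ = _ := lintegral_sectorMajorant ht

/-- There is an absolute constant `C` such that for all `t > 0` and `z₀ ∈ ℝ`,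
`∬_{Ω₃∪Ω₆} e^{8t(U−z₀)V} ((U−z₀)² + V²)^{−1/4} dA(U,V) ≤ C t^{−3/4}`, where
`Ω₃ = {3π/4 < arg(z−z₀) < π}` and `Ω₆ = {−π/4 < arg(z−z₀) < 0}`, i.e.
`{V > 0, U − z₀ < −V} ∪ {V < 0, −V < U − z₀}`. -/
theorem J36_tilde_estimate :
    ∃ C : ℝ, 0 < C ∧ ∀ (t z₀ : ℝ), 0 < t →
      (∫ P in {P : ℝ × ℝ | (0 < P.2 ∧ P.1 - z₀ < -P.2) ∨ (P.2 < 0 ∧ -P.2 < P.1 - z₀)},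
          Real.exp (8 * t * (P.1 - z₀) * P.2) *
            ((P.1 - z₀) ^ 2 + P.2 ^ 2) ^ (-(1 : ℝ) / 4)
          ∂(volume : Measure (ℝ × ℝ))) ≤
        C * t ^ (-(3 : ℝ) / 4) := by
  refine ⟨2 * Gamma (1 / 2) * Gamma (1 / 4) * 4 ^ (-(3 : ℝ) / 4), by positivity,
    fun t z₀ ht => ?_⟩
  have h_shift := (measurePreserving_sub_right volume ((z₀, 0) : ℝ × ℝ)).setIntegral_preimage_emb
    (Homeomorph.subRight ((z₀, 0) : ℝ × ℝ)).measurableEmbedding (sectorIntegrand t) omega36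
  calc _ = ∫ P in omega36, sectorIntegrand t P := by
        simpa only [omega36, sectorIntegrand, preimage_ofPred_eq, Prod.fst_sub, Prod.snd_sub,
          sub_zero] using h_shift
    _ ≤ 2 * Gamma (1 / 2) * Gamma (1 / 4) * (4 * t) ^ (-(3 : ℝ) / 4) :=
        setIntegral_omega36_sectorIntegrand_le ht
    _ = _ := by rw [mul_rpow (by norm_num) ht.le]; ring
end

section
/- Let z₀ ∈ ℝ and let S ⊂ ℝ² be the union of the four sectors where |arg(z − z₀)| ∈ (0, π/4) ∪ (3π/4, π) (i.e., the region between the real axis and the two diagonals through z₀). Then for all v with |v| > |z₀| and all (U,V) ∈ S, √((U² + V²)/(U² + (V − v)²)) ≤ 1 + √2 · |v|/(|v| − |z₀|). -/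
/-!
Let `d = √(U² + (V - v)²)` be the distance from `U + iV` to `iv`. The triangle inequality gives
`√(U² + V²) ≤ d + |v|`, so the left-hand side is at most `1 + |v| / d`. In the sectors
`|V| < |U - z₀| ≤ |U| + |z₀|`, hence `|V - v| ≥ |v| - |V|` yields `|U| + |V - v| ≥ |v| - |z₀|`;
since `|U| + |V - v| ≤ √2 d`, this bounds `d` below by `(|v| - |z₀|) / √2`.
-/

lemma abs_add_abs_le_sqrt_two_mul_sqrt_sq_add_sq (x y : ℝ) :
    |x| + |y| ≤ √2 * √(x ^ 2 + y ^ 2) := by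
  rw [← Real.sqrt_mul zero_le_two]
  apply Real.le_sqrt_of_sq_le
  nlinarith [sq_abs x, sq_abs y, sq_nonneg (|x| - |y|)]

lemma sqrt_sq_add_sq_le_sqrt_sq_add_sq_sub_add_abs (x y c : ℝ) :
    √(x ^ 2 + y ^ 2) ≤ √(x ^ 2 + (y - c) ^ 2) + |c| := by
  simpa [Complex.norm_eq_sqrt_sq_add_sq, Real.sqrt_sq_eq_abs] using
    norm_le_norm_add_norm_sub' (⟨x, y⟩ : ℂ) ⟨x, y - c⟩

lemma abs_sub_abs_le_abs_add_abs_sub_of_abs_le_abs_sub {z₀ U V v : ℝ} (h : |V| ≤ |U - z₀|) :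
    |v| - |z₀| ≤ |U| + |V - v| := by
  have hv : |v| ≤ |V| + |V - v| := by simpa using abs_sub V (V - v)
  linarith [abs_sub U z₀]

/-- Geometric kernel estimate: on the union `S` of the four sectors where
`|arg(z − z₀)| ∈ (0, π/4) ∪ (3π/4, π)`, i.e. `0 < |V| < |U − z₀|`, one has for `|v| > |z₀|`:
`√((U² + V²)/(U² + (V − v)²)) ≤ 1 + √2 |v|/(|v| − |z₀|)`. -/
theorem kernel_geometric_estimate (z₀ v : ℝ) (hv : |z₀| < |v|) :
    ∀ U V : ℝ, V ≠ 0 → |V| < |U - z₀| →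
      Real.sqrt ((U ^ 2 + V ^ 2) / (U ^ 2 + (V - v) ^ 2)) ≤
        1 + Real.sqrt 2 * |v| / (|v| - |z₀|) := by
  intro U V _ hVU
  set d := √(U ^ 2 + (V - v) ^ 2)
  have hgap : 0 < |v| - |z₀| := sub_pos.mpr hv
  have hd : |v| - |z₀| ≤ √2 * d :=
    (abs_sub_abs_le_abs_add_abs_sub_of_abs_le_abs_sub hVU.le).trans
      (abs_add_abs_le_sqrt_two_mul_sqrt_sq_add_sq U (V - v))
  have hd0 : 0 < d := pos_of_mul_pos_right (hgap.trans_le hd) (by positivity)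
  calc √((U ^ 2 + V ^ 2) / (U ^ 2 + (V - v) ^ 2))
      = √(U ^ 2 + V ^ 2) / d := Real.sqrt_div' _ (by positivity)
    _ ≤ (d + |v|) / d := by
        gcongr; exact sqrt_sq_add_sq_le_sqrt_sq_add_sq_sub_add_abs U V v
    _ = 1 + |v| / d := by field_simp
    _ ≤ 1 + √2 * |v| / (|v| - |z₀|) := by
        gcongr 1 + ?_
        rw [div_le_div_iff₀ hd0 hgap]
        calc |v| * (|v| - |z₀|) ≤ |v| * (√2 * d) := by gcongr
          _ = √2 * |v| * d := by ring
end
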